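/- The function h̃ is strictly decreasing on the interval (−∞, −√2) and strictly increasing on the interval (−√2, −2/√3). -/

import Mathlib

open Filter Set

/-- `h̃(m) = √((m+1)/(m-1)) · exp((m² - 2)/(2 m (m² - 1)))`. -/
noncomputable def htilde (m : ℝ) : ℝ :=
  Real.sqrt ((m + 1) / (m - 1)) * Real.exp ((m ^ 2 - 2) / (2 * m * (m ^ 2 - 1)))

private lemma htilde_pos {m : ℝ} (hm : m < -1) : 0 < htilde m := by
  have h1 : (0:ℝ) < (m + 1) / (m - 1) :=
    div_pos_of_neg_of_neg (by linarith) (by linarith)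
  exact mul_pos (Real.sqrt_pos.mpr h1) (Real.exp_pos _)

private lemma htilde_hasDerivAt {m : ℝ} (hm : m < -1) :
    HasDerivAt htilde
      (htilde m * (-((3 * m ^ 2 - 1) * (m ^ 2 - 2)) / (2 * m ^ 2 * (m ^ 2 - 1) ^ 2))) m := by
  have hm0 : m ≠ 0 := by linarith
  have h1 : m - 1 ≠ 0 := by linarith
  have h2 : m + 1 ≠ 0 := by linarith
  have h3 : m ^ 2 - 1 ≠ 0 := by nlinarith
  have hden : 2 * m * (m ^ 2 - 1) ≠ 0 := mul_ne_zero (mul_ne_zero two_ne_zero hm0) h3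
  have hupos : (0:ℝ) < (m + 1) / (m - 1) :=
    div_pos_of_neg_of_neg (by linarith) (by linarith)
  have hu : HasDerivAt (fun x : ℝ => (x + 1) / (x - 1))
      ((1 * (m - 1) - (m + 1) * 1) / (m - 1) ^ 2) m :=
    ((hasDerivAt_id m).add_const 1).div ((hasDerivAt_id m).sub_const 1) h1
  have hs : HasDerivAt (fun x : ℝ => Real.sqrt ((x + 1) / (x - 1)))
      (((1 * (m - 1) - (m + 1) * 1) / (m - 1) ^ 2) /
        (2 * Real.sqrt ((m + 1) / (m - 1)))) m :=
    hu.sqrt (ne_of_gt hupos)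
  have hnum : HasDerivAt (fun x : ℝ => x ^ 2 - 2) (2 * m ^ 1) m :=
    (hasDerivAt_pow 2 m).sub_const 2
  have hd : HasDerivAt (fun x : ℝ => 2 * x * (x ^ 2 - 1))
      (2 * 1 * (m ^ 2 - 1) + 2 * m * (2 * m ^ 1)) m := by
    have hA : HasDerivAt (fun x : ℝ => 2 * x) (2 * 1) m := (hasDerivAt_id m).const_mul 2
    have hB : HasDerivAt (fun x : ℝ => x ^ 2 - 1) (2 * m ^ 1) m :=
      (hasDerivAt_pow 2 m).sub_const 1
    exact (hA.mul hB).congr_deriv (by ring)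
  have hv : HasDerivAt (fun x : ℝ => (x ^ 2 - 2) / (2 * x * (x ^ 2 - 1)))
      ((2 * m ^ 1 * (2 * m * (m ^ 2 - 1)) -
        (m ^ 2 - 2) * (2 * 1 * (m ^ 2 - 1) + 2 * m * (2 * m ^ 1))) /
        (2 * m * (m ^ 2 - 1)) ^ 2) m :=
    hnum.div hd hden
  have he := hv.exp
  have hprod : HasDerivAt htilde _ m := hs.mul he
  convert hprod using 1
  set s := Real.sqrt ((m + 1) / (m - 1)) with hsdef
  have hss : s * s = (m + 1) / (m - 1) := Real.mul_self_sqrt hupos.le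
  have hs0 : s ≠ 0 := ne_of_gt (Real.sqrt_pos.mpr hupos)
  set E := Real.exp ((m ^ 2 - 2) / (2 * m * (m ^ 2 - 1))) with hEdef
  set dv := (2 * m ^ 1 * (2 * m * (m ^ 2 - 1)) -
      (m ^ 2 - 2) * (2 * 1 * (m ^ 2 - 1) + 2 * m * (2 * m ^ 1))) /
      (2 * m * (m ^ 2 - 1)) ^ 2 with hdvdef
  have key : (1 * (m - 1) - (m + 1) * 1) / (m - 1) ^ 2 / (2 * s) =
      s * (-1 / (m ^ 2 - 1)) := by
    rw [div_eq_iff (by positivity : (2:ℝ) * s ≠ 0)]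
    have : s * (-1 / (m ^ 2 - 1)) * (2 * s) = s * s * (-2 / (m ^ 2 - 1)) := by ring
    rw [this, hss]
    field_simp
    ring
  have hrat : -((3 * m ^ 2 - 1) * (m ^ 2 - 2)) / (2 * m ^ 2 * (m ^ 2 - 1) ^ 2) =
      -1 / (m ^ 2 - 1) + dv := by
    rw [hdvdef]
    field_simp
    ring
  show s * E * (-((3 * m ^ 2 - 1) * (m ^ 2 - 2)) / (2 * m ^ 2 * (m ^ 2 - 1) ^ 2)) =
      (1 * (m - 1) - (m + 1) * 1) / (m - 1) ^ 2 / (2 * s) * E + s * (E * dv)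
  rw [key, hrat]
  ring

/-- h̃ is strictly decreasing on (-∞, -√2) and strictly increasing on (-√2, -2/√3). -/
theorem htilde_monotone :
    StrictAntiOn htilde (Set.Iio (-Real.sqrt 2)) ∧
    StrictMonoOn htilde (Set.Ioo (-Real.sqrt 2) (-2 / Real.sqrt 3)) := by
  have hsq2 : Real.sqrt 2 ^ 2 = 2 := Real.sq_sqrt (by norm_num)
  have hsq2nn : (0:ℝ) ≤ Real.sqrt 2 := Real.sqrt_nonneg 2
  have hs2 : (1:ℝ) < Real.sqrt 2 := by nlinarith
  have h3pos : (0:ℝ) < Real.sqrt 3 := Real.sqrt_pos.mpr (by norm_num)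
  have hsq3 : Real.sqrt 3 ^ 2 = 3 := Real.sq_sqrt (by norm_num)
  have hs3 : Real.sqrt 3 < 2 := by nlinarith
  have hA : -Real.sqrt 2 < -1 := by linarith
  have hB : -2 / Real.sqrt 3 < -1 := by
    rw [div_lt_iff₀ h3pos]
    nlinarith
  constructor
  · apply strictAntiOn_of_deriv_neg (convex_Iio _)
    · intro x hx
      have hx1 : x < -1 := lt_trans hx hA
      exact (htilde_hasDerivAt hx1).differentiableAt.continuousAt.continuousWithinAt
    · intro x hx
      rw [interior_Iio] at hx
      have hx1 : x < -1 := lt_trans hx hA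
      have hx2 : 2 < x ^ 2 := by nlinarith [Set.mem_Iio.mp hx]
      rw [(htilde_hasDerivAt hx1).deriv]
      apply mul_neg_of_pos_of_neg (htilde_pos hx1)
      apply div_neg_of_neg_of_pos
      · nlinarith
      · have e1 : (0:ℝ) < x ^ 2 := by nlinarith
        have e2 : (0:ℝ) < (x ^ 2 - 1) ^ 2 := by nlinarith
        nlinarith
  · apply strictMonoOn_of_deriv_pos (convex_Ioo _ _)
    · intro x hx
      have hx1 : x < -1 := lt_trans hx.2 hB
      exact (htilde_hasDerivAt hx1).differentiableAt.continuousAt.continuousWithinAt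
    · intro x hx
      rw [interior_Ioo] at hx
      have hx1 : x < -1 := lt_trans hx.2 hB
      have hxlt : x ^ 2 < 2 := by nlinarith [hx.1]
      have hxgt : 1 < x ^ 2 := by nlinarith
      rw [(htilde_hasDerivAt hx1).deriv]
      apply mul_pos (htilde_pos hx1)
      apply div_pos
      · nlinarith
      · have e1 : (0:ℝ) < x ^ 2 := by nlinarith
        have e2 : (0:ℝ) < (x ^ 2 - 1) ^ 2 := by nlinarith
        nlinarith
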